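/- Let θ ∈ ℝ and N ≥ 1 an integer, and suppose ‖θ − a/q‖ < 1/(qN) for coprime integers 0 ≤ a < q ≤ N, where ‖·‖ denotes distance to the nearest integer. Then for any real β, ∑_{|m| ≤ N} min(N², ‖mθ + β‖^{-2}) ≤ C · N³ / (q(1 + N‖θ − a/q‖^{1/2})²) for an absolute constant C. -/

import Mathlib

/-!
Write `θ ≡ a/q + ε` and `β ≡ b/q + γ` modulo `1`, with `q N |ε| < 1` and `|γ| ≤ 1/(2q)`. Then
`mθ + β ≡ k/q + γ + mε` where `k ≡ ma + b (mod q)`, and `|γ + mε| ≤ 3/(2q)` for `|m| ≤ N`.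
As `a` is a unit mod `q`, each residue `k` comes from a single class of `m` mod `q`, that is from
at most `3N/q` values of `m`.

For `2 ≤ k ≤ q - 2` the point stays at distance `≥ min(k, q - k)/(4q)` from `ℤ`, so these residues
contribute `O(N q ∑ 1/k²) = O(N q)`. For the three residues `k ∈ {0, 1, q - 1}` use either the
trivial bound `(3N/q) N²` or, when `N² |ε| > 1`, the fact that the points `k/q + γ + mε` of one
class are `q |ε|`-separated and lie in an interval of length `2`, which gives
`O(N² + N/(q |ε|))`.
-/

/-- Distance from a real number to the nearest integer. -/
noncomputable def distInt (x : ℝ) : ℝ := |x - round x|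

open Finset

lemma distInt_add_intCast (x : ℝ) (n : ℤ) : distInt (x + n) = distInt x := by
  simp only [distInt, round_add_intCast, Int.cast_add, add_sub_add_right_eq_sub]

lemma distInt_le_distInt_add_abs_sub (x y : ℝ) : distInt x ≤ distInt y + |x - y| :=
  calc distInt x ≤ |x - round y| := round_le x _
    _ = |(y - round y) + (x - y)| := by ring_nf
    _ ≤ distInt y + |x - y| := abs_add_le _ _

lemma min_le_distInt (x : ℝ) : min x (1 - x) ≤ distInt x := by
  rcases le_or_gt (round x) 0 with h | h
  · have : (round x : ℝ) ≤ 0 := by exact_mod_cast h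
    exact (min_le_left _ _).trans (by rw [distInt]; exact le_abs.2 (Or.inl (by linarith)))
  · have : (1 : ℝ) ≤ round x := by exact_mod_cast h
    exact (min_le_right _ _).trans (by rw [distInt]; exact le_abs.2 (Or.inr (by linarith)))

lemma inv_sq_le_inv_sq {s t : ℝ} (hs : 0 < s) (hst : s ≤ t) : t⁻¹ ^ 2 ≤ s⁻¹ ^ 2 :=
  pow_le_pow_left₀ (inv_nonneg.2 (hs.le.trans hst)) (inv_anti₀ hs hst) 2

/-- `min (N ^ 2) (distInt x)⁻¹ ^ 2`, with the value `N ^ 2` at `distInt x = 0` built in. -/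
noncomputable def weight (N x : ℝ) : ℝ := (max (distInt x) N⁻¹)⁻¹ ^ 2

lemma weight_le_sq {N : ℝ} (hN : 0 < N) (x : ℝ) : weight N x ≤ N ^ 2 := by
  simpa only [inv_inv, weight] using inv_sq_le_inv_sq (inv_pos.2 hN) (le_max_right (distInt x) N⁻¹)

lemma ite_eq_weight {N : ℝ} (hN : 0 < N) (x : ℝ) :
    (if distInt x = 0 then N ^ 2 else min (N ^ 2) ((distInt x)⁻¹ ^ 2)) = weight N x := by
  rw [weight]
  split_ifs with h
  · rw [h, max_eq_right (inv_pos.2 hN).le, inv_inv]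
  · have hd' : 0 < distInt x := lt_of_le_of_ne (abs_nonneg _) (Ne.symm h)
    rcases le_total (distInt x) N⁻¹ with hle | hle
    · rw [max_eq_right hle, inv_inv,
        min_eq_left (pow_le_pow_left₀ hN.le ((le_inv_comm₀ hd' hN).1 hle) 2)]
    · rw [max_eq_left hle,
        min_eq_right (pow_le_pow_left₀ (by positivity) (inv_le_of_inv_le₀ hN hle) 2)]

lemma sum_range_inv_sq_le {h A : ℝ} (hh : 0 < h) (hA : 0 < A) (M : ℕ) :
    ∑ i ∈ range M, ((i : ℝ) * h + A)⁻¹ ^ 2 ≤ A⁻¹ ^ 2 + (h * A)⁻¹ := by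
  have hstep : ∀ u > 0, (u + h)⁻¹ ^ 2 + (h * (u + h))⁻¹ ≤ (h * u)⁻¹ := by
    intro u hu
    rw [inv_pow, ← one_div, ← one_div, ← one_div, div_add_div _ _ (by positivity) (by positivity),
      div_le_div_iff₀ (by positivity) (by positivity)]
    nlinarith [mul_pos (mul_pos hh (add_pos hu hh)) (mul_pos hh hh)]
  have hpartial : ∀ M : ℕ, ∑ i ∈ range (M + 1), ((i : ℝ) * h + A)⁻¹ ^ 2 + (h * (M * h + A))⁻¹
      ≤ A⁻¹ ^ 2 + (h * A)⁻¹ := by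
    intro M
    induction M with
    | zero => simp
    | succ M ih =>
      have := hstep (M * h + A) (by positivity)
      rw [sum_range_succ]
      push_cast
      rw [show ((M : ℝ) + 1) * h + A = M * h + A + h by ring]
      linarith
  rcases M with _ | M
  · simp; positivity
  · linarith [hpartial M, inv_nonneg.2 (by positivity : (0:ℝ) ≤ h * (M * h + A))]

lemma sum_inv_sq_min_le (q : ℕ) : ∑ k ∈ Icc 2 (q - 2), (min (k : ℝ) (q - k))⁻¹ ^ 2 ≤ 2 := by
  have hbasel : ∑ k ∈ Icc 2 (q - 2), (k : ℝ)⁻¹ ^ 2 ≤ 1 :=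
    calc ∑ k ∈ Icc 2 (q - 2), (k : ℝ)⁻¹ ^ 2 ≤ ∑ k ∈ Ioo 1 q, ((k : ℝ) ^ 2)⁻¹ := by
          simp_rw [inv_pow]
          refine sum_le_sum_of_subset_of_nonneg (fun k hk => ?_) fun _ _ _ => by positivity
          simp only [mem_Icc, mem_Ioo] at hk ⊢
          omega
      _ ≤ 2 / ((1 : ℕ) + 1) := sum_Ioo_inv_sq_le 1 q
      _ = 1 := by norm_num
  have hreflect :
      ∑ k ∈ Icc 2 (q - 2), ((q : ℝ) - k)⁻¹ ^ 2 = ∑ k ∈ Icc 2 (q - 2), (k : ℝ)⁻¹ ^ 2 := by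
    refine sum_nbij' (q - ·) (q - ·) ?_ ?_ ?_ ?_ ?_ <;> intro k hk <;> simp only [mem_Icc] at hk
    · simp only [mem_Icc]; omega
    · simp only [mem_Icc]; omega
    · omega
    · omega
    · rw [Nat.cast_sub (by omega)]
  calc ∑ k ∈ Icc 2 (q - 2), (min (k : ℝ) (q - k))⁻¹ ^ 2
      ≤ ∑ k ∈ Icc 2 (q - 2), ((k : ℝ)⁻¹ ^ 2 + ((q : ℝ) - k)⁻¹ ^ 2) := by
        refine sum_le_sum fun k _ => ?_
        rcases min_choice (k : ℝ) (q - k) with h | h <;> rw [h]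
        · exact le_add_of_nonneg_right (by positivity)
        · exact le_add_of_nonneg_left (by positivity)
    _ ≤ 2 := by rw [sum_add_distrib, hreflect]; linarith

section Separated

variable {ι : Type*} {J : Finset ι} {x : ι → ℝ} {h N : ℝ}

lemma sum_inv_sq_max_le_of_separated (hh : 0 < h) (hN : 0 < N) (hx : ∀ j ∈ J, 0 ≤ x j)
    (hsep : ∀ j ∈ J, ∀ j' ∈ J, j ≠ j' → h ≤ |x j - x j'|) :
    ∑ j ∈ J, (max (x j) N⁻¹)⁻¹ ^ 2 ≤ 4 * (N ^ 2 + N / h) := by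
  classical
  -- the point `x j` lies in the cell `[e j * h, (e j + 1) * h)`; distinct points use distinct cells
  set e : ι → ℕ := fun j => ⌊x j / h⌋₊
  have he : ∀ j ∈ J, (e j : ℝ) * h ≤ x j ∧ x j < (e j + 1) * h := fun j hj =>
    ⟨(le_div_iff₀ hh).1 (Nat.floor_le (div_nonneg (hx j hj) hh.le)),
      (div_lt_iff₀ hh).1 (Nat.lt_floor_add_one _)⟩
  have hinj : Set.InjOn e J := by
    intro j hj j' hj' hjj'
    by_contra hne
    obtain ⟨h1, h1'⟩ := he j hj
    obtain ⟨h2, h2'⟩ := he j' hj'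
    rw [show e j = e j' from hjj'] at h1 h1'
    have : |x j - x j'| < h := by rw [abs_lt]; constructor <;> linarith
    exact (hsep j hj j' hj' hne).not_gt this
  set g : ℕ → ℝ := fun i => ((i : ℝ) * h + N⁻¹)⁻¹ ^ 2
  have hpt : ∀ j ∈ J, (max (x j) N⁻¹)⁻¹ ^ 2 ≤ 4 * g (e j) := by
    intro j hj
    have : ((e j : ℝ) * h + N⁻¹) / 2 ≤ max (x j) N⁻¹ := by
      have := (he j hj).1
      have := le_max_left (x j) N⁻¹
      have := le_max_right (x j) N⁻¹
      linarith
    calc (max (x j) N⁻¹)⁻¹ ^ 2 ≤ (((e j : ℝ) * h + N⁻¹) / 2)⁻¹ ^ 2 :=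
          inv_sq_le_inv_sq (by positivity) this
      _ = 4 * g (e j) := by simp only [g]; field_simp; norm_num
  obtain ⟨M, hM⟩ := (J.image e).exists_nat_subset_range
  calc ∑ j ∈ J, (max (x j) N⁻¹)⁻¹ ^ 2 ≤ ∑ j ∈ J, 4 * g (e j) := sum_le_sum hpt
    _ = 4 * ∑ i ∈ J.image e, g i := by rw [sum_image hinj, mul_sum]
    _ ≤ 4 * ∑ i ∈ range M, g i := by gcongr
    _ ≤ 4 * (N ^ 2 + N / h) := by
        gcongr
        exact (sum_range_inv_sq_le hh (inv_pos.2 hN) M).trans_eq (by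
          rw [inv_inv, mul_inv, inv_inv, div_eq_mul_inv, mul_comm N])

lemma sum_inv_sq_max_abs_le_of_separated (hh : 0 < h) (hN : 0 < N)
    (hsep : ∀ j ∈ J, ∀ j' ∈ J, j ≠ j' → h ≤ |x j - x j'|) :
    ∑ j ∈ J, (max |x j| N⁻¹)⁻¹ ^ 2 ≤ 8 * (N ^ 2 + N / h) := by
  classical
  have hnonneg := sum_inv_sq_max_le_of_separated (J := J.filter (0 ≤ x ·)) hh hN
    (fun j hj => (mem_filter.1 hj).2)
    (fun j hj j' hj' => hsep j (mem_filter.1 hj).1 j' (mem_filter.1 hj').1)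
  have hneg := sum_inv_sq_max_le_of_separated (J := J.filter (¬ 0 ≤ x ·)) (x := fun j => -x j)
    hh hN (fun j hj => neg_nonneg.2 (not_le.1 (mem_filter.1 hj).2).le)
    (fun j hj j' hj' hne => by
      rw [neg_sub_neg, abs_sub_comm]
      exact hsep j (mem_filter.1 hj).1 j' (mem_filter.1 hj').1 hne)
  rw [← sum_filter_add_sum_filter_not J (0 ≤ x ·)]
  calc _ = ∑ j ∈ J with 0 ≤ x j, (max (x j) N⁻¹)⁻¹ ^ 2
        + ∑ j ∈ J with ¬0 ≤ x j, (max (-x j) N⁻¹)⁻¹ ^ 2 := by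
        congr 1 <;> refine sum_congr rfl fun j hj => ?_
        · rw [abs_of_nonneg (mem_filter.1 hj).2]
        · rw [abs_of_neg (not_le.1 (mem_filter.1 hj).2)]
    _ ≤ 8 * (N ^ 2 + N / h) := by linarith

lemma sum_weight_le_of_separated {c : ℝ} (hh : 0 < h) (hN : 0 < N)
    (hc : ∀ j ∈ J, |x j - c| ≤ 1) (hsep : ∀ j ∈ J, ∀ j' ∈ J, j ≠ j' → h ≤ |x j - x j'|) :
    ∑ j ∈ J, weight N (x j) ≤ 40 * (N ^ 2 + N / h) := by
  set W := Icc (round c - 2) (round c + 2)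
  have hW : ∀ j ∈ J, round (x j) ∈ W := by
    intro j hj
    have h1 := abs_le.1 (abs_sub_round (x j))
    have h2 := abs_le.1 (abs_sub_round c)
    have h3 := abs_le.1 (hc j hj)
    have : |((round (x j) - round c : ℤ) : ℝ)| < 3 := by
      rw [abs_lt]; push_cast; constructor <;> linarith
    have := abs_lt.1 (show |round (x j) - round c| < 3 by exact_mod_cast this)
    rw [mem_Icc]
    omega
  calc ∑ j ∈ J, weight N (x j) ≤ ∑ j ∈ J, ∑ n ∈ W, (max |x j - n| N⁻¹)⁻¹ ^ 2 :=
        sum_le_sum fun j hj => single_le_sum (f := fun n : ℤ => (max |x j - n| N⁻¹)⁻¹ ^ 2)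
          (fun n _ => by positivity) (hW j hj)
    _ = ∑ n ∈ W, ∑ j ∈ J, (max |x j - n| N⁻¹)⁻¹ ^ 2 := sum_comm
    _ ≤ ∑ n ∈ W, 8 * (N ^ 2 + N / h) :=
        sum_le_sum fun n _ => sum_inv_sq_max_abs_le_of_separated (x := fun j => x j - n) hh hN
          fun j hj j' hj' hne => by
            rw [sub_sub_sub_cancel_right]
            exact hsep j hj j' hj' hne
    _ = 40 * (N ^ 2 + N / h) := by
        rw [sum_const, Int.card_Icc, show (round c + 2 + 1 - (round c - 2)).toNat = 5 by omega,
          nsmul_eq_mul]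
        push_cast
        ring

end Separated

lemma card_le_of_dvd_sub {N q : ℕ} (hq : 0 < q) (hqN : q ≤ N) {S : Finset ℤ}
    (hS : S ⊆ Icc (-(N : ℤ)) N) (hdvd : ∀ m ∈ S, ∀ m' ∈ S, (q : ℤ) ∣ m' - m) :
    (#S : ℝ) ≤ 3 * N / q := by
  -- within one residue class mod `q`, the quotient `(m + N) / q` determines `m`
  set e : ℤ → ℕ := fun m => ((m + N) / q).toNat
  have hmaps : Set.MapsTo e S (range (2 * N / q + 1)) := by
    intro m hm
    have := mem_Icc.1 (hS hm)
    have h0 : 0 ≤ (m + N) / q := Int.ediv_nonneg (by omega) (Int.natCast_nonneg q)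
    have h1 : (m + N) / q ≤ ((2 * N / q : ℕ) : ℤ) := by
      rw [Int.natCast_div]
      exact Int.ediv_le_ediv (by omega) (by push_cast; omega)
    simp only [coe_range, Set.mem_Iio, e]
    omega
  have hinj : Set.InjOn e S := by
    intro m hm m' hm' hmm'
    have := mem_Icc.1 (hS hm)
    have := mem_Icc.1 (hS hm')
    have hdiv : (m + N) / q = (m' + N) / q := by
      have := Int.ediv_nonneg (by omega : 0 ≤ m + N) (Int.natCast_nonneg q)
      have := Int.ediv_nonneg (by omega : 0 ≤ m' + N) (Int.natCast_nonneg q)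
      simp only [e] at hmm'
      omega
    have hmod : (m + N) % q = (m' + N) % q :=
      ((Int.modEq_iff_dvd.2 (hdvd m hm m' hm')).add_right N).eq
    have := Int.mul_ediv_add_emod (m + N) q
    have := Int.mul_ediv_add_emod (m' + N) q
    rw [hdiv, hmod] at *
    linarith
  have hcard : #S ≤ 2 * N / q + 1 := by simpa using card_le_card_of_injOn e hmaps hinj
  have hqr : (0 : ℝ) < q := by exact_mod_cast hq
  calc (#S : ℝ) ≤ ((2 * N / q : ℕ) : ℝ) + 1 := by exact_mod_cast hcard
    _ ≤ 2 * N / q + N / q := by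
        gcongr
        · exact_mod_cast Nat.cast_div_le
        · rw [le_div_iff₀ hqr, one_mul]; exact_mod_cast hqN
    _ = 3 * N / q := by ring

def residue (q : ℕ) (a b m : ℤ) : ℕ := ((m * a + b) % q).toNat

section Residue

variable {q : ℕ} {a b : ℤ}

lemma natCast_residue (hq : 0 < q) (m : ℤ) : (residue q a b m : ℤ) = (m * a + b) % q :=
  Int.toNat_of_nonneg (Int.emod_nonneg _ (by omega))

lemma residue_lt (hq : 0 < q) (m : ℤ) : residue q a b m < q := by
  have := Int.emod_lt_of_pos (m * a + b) (by omega : (0 : ℤ) < q)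
  have := natCast_residue (a := a) (b := b) hq m
  omega

lemma dvd_sub_of_residue_eq (hq : 0 < q) (hcop : IsCoprime a q) {m m' : ℤ}
    (h : residue q a b m = residue q a b m') : (q : ℤ) ∣ m' - m := by
  have hmod : m * a + b ≡ m' * a + b [ZMOD q] := by
    rw [Int.ModEq, ← natCast_residue hq, ← natCast_residue hq, h]
  have : (q : ℤ) ∣ (m' - m) * a := by
    rw [show (m' - m) * a = m' * a + b - (m * a + b) by ring]
    exact Int.modEq_iff_dvd.1 hmod
  exact hcop.symm.dvd_of_dvd_mul_right this

lemma distInt_eq_residue (hq : 0 < q) (m : ℤ) (ε γ : ℝ) :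
    distInt (m * (a / q + ε) + (b / q + γ)) = distInt (residue q a b m / q + γ + m * ε) := by
  have h : (m : ℝ) * a + b = q * ((m * a + b) / q : ℤ) + residue q a b m := by
    have := Int.mul_ediv_add_emod (m * a + b) q
    rw [← natCast_residue hq] at this
    exact_mod_cast this.symm
  rw [← distInt_add_intCast (residue q a b m / q + γ + m * ε) ((m * a + b) / q)]
  congr 1
  field_simp
  linear_combination h

end Residue

lemma weight_le_of_far {N η : ℝ} {q k : ℕ} (hk : 2 ≤ k) (hkq : k + 2 ≤ q)
    (hη : |η| ≤ 3 / (2 * q)) :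
    weight N (k / q + η) ≤ 16 * q ^ 2 * (min (k : ℝ) (q - k))⁻¹ ^ 2 := by
  set μ := min (k : ℝ) (q - k)
  have hq : (0 : ℝ) < q := by exact_mod_cast (by omega : 0 < q)
  have hμ : 2 ≤ μ := le_min (by exact_mod_cast hk)
    (by have : (k : ℝ) + 2 ≤ q := (by exact_mod_cast hkq); linarith)
  have hmin : μ / q ≤ distInt (k / q) :=
    calc μ / q = min ((k : ℝ) / q) (1 - k / q) := by
          rw [one_sub_div hq.ne', min_div_div_right hq.le]
      _ ≤ distInt (k / q) := min_le_distInt _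
  have hdist : μ / (4 * q) ≤ distInt (k / q + η) := by
    have := distInt_le_distInt_add_abs_sub (k / q : ℝ) (k / q + η)
    rw [sub_add_cancel_left, abs_neg] at this
    have : μ / (4 * q) = μ / q - 3 / (2 * q) - (3 * μ - 6) / (4 * q) := by field_simp; ring
    have : 0 ≤ (3 * μ - 6) / (4 * q) := div_nonneg (by linarith) (by positivity)
    linarith
  calc weight N (k / q + η) ≤ (μ / (4 * q))⁻¹ ^ 2 :=
        inv_sq_le_inv_sq (by positivity) (hdist.trans (le_max_left _ _))
    _ = 16 * q ^ 2 * μ⁻¹ ^ 2 := by field_simp; ring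

noncomputable def scale (N q : ℕ) (ε : ℝ) : ℝ := N ^ 3 / (q * (1 + N * √|ε|) ^ 2)

lemma mul_le_four_mul_scale {N q : ℕ} {ε : ℝ} (hq : 0 < q) (hqN : q ≤ N)
    (hε : q * N * |ε| ≤ 1) : (N : ℝ) * q ≤ 4 * scale N q ε := by
  have hNr : (0 : ℝ) < N := by exact_mod_cast hq.trans_le hqN
  have hqN' : (q : ℝ) ≤ N := by exact_mod_cast hqN
  have ht2 : ((N : ℝ) * √|ε|) ^ 2 = N ^ 2 * |ε| := by rw [mul_pow, Real.sq_sqrt (abs_nonneg _)]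
  have hden : q * (1 + N * √|ε|) ^ 2 ≤ 4 * N := by nlinarith [sq_nonneg ((N : ℝ) * √|ε| - 1)]
  rw [scale, mul_div_assoc', le_div_iff₀ (by positivity)]
  calc (N : ℝ) * q * (q * (1 + N * √|ε|) ^ 2) ≤ N * N * (4 * N) := by gcongr
    _ = 4 * N ^ 3 := by ring

section Fibers

variable {N q : ℕ} {S : Finset ℤ}

lemma sum_weight_le_of_far {k : ℕ} {γ ε : ℝ} (hq : 0 < q) (hqN : q ≤ N)
    (hS : S ⊆ Icc (-(N : ℤ)) N) (hdvd : ∀ m ∈ S, ∀ m' ∈ S, (q : ℤ) ∣ m' - m)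
    (hk : 2 ≤ k) (hkq : k + 2 ≤ q) (hη : ∀ m ∈ S, |γ + m * ε| ≤ 3 / (2 * q)) :
    ∑ m ∈ S, weight N (k / q + γ + m * ε) ≤ 48 * N * q * (min (k : ℝ) (q - k))⁻¹ ^ 2 := by
  have hqr : (0 : ℝ) < q := by exact_mod_cast hq
  calc ∑ m ∈ S, weight N (k / q + γ + m * ε)
      ≤ #S • (16 * q ^ 2 * (min (k : ℝ) (q - k))⁻¹ ^ 2) :=
        sum_le_card_nsmul _ _ _ fun m hm => by
          rw [add_assoc]; exact weight_le_of_far hk hkq (hη m hm)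
    _ ≤ 3 * N / q * (16 * q ^ 2 * (min (k : ℝ) (q - k))⁻¹ ^ 2) := by
        rw [nsmul_eq_mul]; gcongr; exact card_le_of_dvd_sub hq hqN hS hdvd
    _ = 48 * N * q * (min (k : ℝ) (q - k))⁻¹ ^ 2 := by field_simp; ring

lemma sum_weight_add_mul_le {c ε : ℝ} (hq : 0 < q) (hqN : q ≤ N)
    (hS : S ⊆ Icc (-(N : ℤ)) N) (hdvd : ∀ m ∈ S, ∀ m' ∈ S, (q : ℤ) ∣ m' - m)
    (hε : q * N * |ε| ≤ 1) :
    ∑ m ∈ S, weight N (c + m * ε) ≤ 320 * scale N q ε := by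
  have hqr : (0 : ℝ) < q := by exact_mod_cast hq
  have hNr : (0 : ℝ) < N := by exact_mod_cast hq.trans_le hqN
  have hq1 : (1 : ℝ) ≤ q := by exact_mod_cast hq
  rw [scale]
  set t := (N : ℝ) * √|ε|
  have ht0 : 0 ≤ t := by positivity
  have ht2 : t ^ 2 = N ^ 2 * |ε| := by rw [mul_pow, Real.sq_sqrt (abs_nonneg _)]
  rcases le_or_gt t 1 with ht | ht
  · calc ∑ m ∈ S, weight N (c + m * ε) ≤ #S • (N : ℝ) ^ 2 :=
          sum_le_card_nsmul _ _ _ fun m _ => weight_le_sq hNr _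
      _ ≤ 3 * N / q * N ^ 2 := by
          rw [nsmul_eq_mul]; gcongr; exact card_le_of_dvd_sub hq hqN hS hdvd
      _ ≤ 320 * (N ^ 3 / (q * 4)) := by
          rw [div_mul_eq_mul_div, ← mul_div_assoc, div_le_div_iff₀ hqr (by positivity)]
          nlinarith [pow_pos hNr 3]
      _ ≤ 320 * (N ^ 3 / (q * (1 + t) ^ 2)) := by gcongr; nlinarith
  · have hε0 : 0 < |ε| := by
      by_contra h
      rw [show |ε| = 0 by linarith [abs_nonneg ε]] at ht2
      nlinarith
    have hsep : ∀ m ∈ S, ∀ m' ∈ S, m ≠ m' → q * |ε| ≤ |(c + m * ε) - (c + m' * ε)| := by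
      intro m hm m' hm' hne
      have : (q : ℤ) ≤ |m - m'| := Int.le_of_dvd (abs_pos.2 (sub_ne_zero.2 hne))
        ((dvd_abs _ _).2 (by simpa using (hdvd m' hm' m hm)))
      rw [add_sub_add_left_eq_sub, ← sub_mul, abs_mul]
      gcongr
      exact_mod_cast this
    have hclose : ∀ m ∈ S, |(c + m * ε) - c| ≤ 1 := by
      intro m hm
      have := mem_Icc.1 (hS hm)
      have hm : |(m : ℝ)| ≤ N := abs_le.2 ⟨by exact_mod_cast this.1, by exact_mod_cast this.2⟩
      rw [add_sub_cancel_left, abs_mul]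
      calc |(m : ℝ)| * |ε| ≤ N * |ε| := by gcongr
        _ ≤ q * N * |ε| := by nlinarith
        _ ≤ 1 := hε
    calc ∑ m ∈ S, weight N (c + m * ε) ≤ 40 * (N ^ 2 + N / (q * |ε|)) :=
          sum_weight_le_of_separated (by positivity) hNr hclose hsep
      _ ≤ 80 * N / (q * |ε|) := by
          have : (N : ℝ) ^ 2 ≤ N / (q * |ε|) := by
            rw [le_div_iff₀ (by positivity)]; nlinarith
          rw [mul_div_assoc]
          linarith
      _ = 320 * (N ^ 3 / (q * (4 * t ^ 2))) := by rw [ht2]; field_simp; ring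
      _ ≤ 320 * (N ^ 3 / (q * (1 + t) ^ 2)) := by gcongr; nlinarith

end Fibers

section Residues

variable {N q : ℕ} {a b : ℤ} {ε γ : ℝ}

lemma dvd_sub_of_mem_filter_residue_eq (hq : 0 < q) (hcop : IsCoprime a q) {I : Finset ℤ}
    {k : ℕ} : ∀ m ∈ {m ∈ I | residue q a b m = k}, ∀ m' ∈ {m ∈ I | residue q a b m = k},
      (q : ℤ) ∣ m' - m := fun _ hm _ hm' =>
  dvd_sub_of_residue_eq hq hcop ((mem_filter.1 hm).2.trans (mem_filter.1 hm').2.symm)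

lemma abs_add_mul_le_of_mem_Icc (hq : 0 < q) (hε : q * N * |ε| ≤ 1) (hγ : |γ| ≤ 1 / (2 * q))
    {m : ℤ} (hm : m ∈ Icc (-(N : ℤ)) N) : |γ + m * ε| ≤ 3 / (2 * q) := by
  have hqr : (0 : ℝ) < q := by exact_mod_cast hq
  have hm := mem_Icc.1 hm
  have hmN : |(m : ℝ)| ≤ N := abs_le.2 ⟨by exact_mod_cast hm.1, by exact_mod_cast hm.2⟩
  have : |(m : ℝ) * ε| ≤ 1 / q := by
    rw [abs_mul, le_div_iff₀ hqr]
    calc |(m : ℝ)| * |ε| * q ≤ N * |ε| * q := by gcongr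
      _ ≤ 1 := by linarith
  calc |γ + m * ε| ≤ |γ| + |(m : ℝ) * ε| := abs_add_le _ _
    _ ≤ 1 / (2 * q) + 1 / q := add_le_add hγ this
    _ = 3 / (2 * q) := by field_simp; norm_num

lemma sum_far_residues_le (hq : 0 < q) (hqN : q ≤ N) (hcop : IsCoprime a q)
    (hε : q * N * |ε| ≤ 1) (hγ : |γ| ≤ 1 / (2 * q)) :
    ∑ k ∈ range q with 2 ≤ k ∧ k + 2 ≤ q,
      ∑ m ∈ Icc (-(N : ℤ)) N with residue q a b m = k, weight N (k / q + γ + m * ε)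
        ≤ 96 * N * q :=
  calc _ ≤ ∑ k ∈ range q with 2 ≤ k ∧ k + 2 ≤ q, 48 * N * q * (min (k : ℝ) (q - k))⁻¹ ^ 2 :=
        sum_le_sum fun k hk => sum_weight_le_of_far hq hqN (filter_subset _ _)
          (dvd_sub_of_mem_filter_residue_eq hq hcop) (mem_filter.1 hk).2.1 (mem_filter.1 hk).2.2
          fun m hm => abs_add_mul_le_of_mem_Icc hq hε hγ (mem_filter.1 hm).1
    _ ≤ 48 * N * q * ∑ k ∈ Icc 2 (q - 2), (min (k : ℝ) (q - k))⁻¹ ^ 2 := by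
        rw [← mul_sum]
        gcongr
        intro k hk
        simp only [mem_filter, mem_range, mem_Icc] at hk ⊢
        omega
    _ ≤ 48 * N * q * 2 := by gcongr; exact sum_inv_sq_min_le q
    _ = 96 * N * q := by ring

lemma sum_near_residues_le (hq : 0 < q) (hqN : q ≤ N) (hcop : IsCoprime a q)
    (hε : q * N * |ε| ≤ 1) :
    ∑ k ∈ range q with ¬(2 ≤ k ∧ k + 2 ≤ q),
      ∑ m ∈ Icc (-(N : ℤ)) N with residue q a b m = k, weight N (k / q + γ + m * ε)
        ≤ 960 * scale N q ε :=
  calc _ ≤ #{k ∈ range q | ¬(2 ≤ k ∧ k + 2 ≤ q)} • (320 * scale N q ε) :=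
        sum_le_card_nsmul _ _ _ fun k _ => sum_weight_add_mul_le hq hqN (filter_subset _ _)
          (dvd_sub_of_mem_filter_residue_eq hq hcop) hε
    _ ≤ 3 • (320 * scale N q ε) := by
        refine nsmul_le_nsmul_left (by unfold scale; positivity)
          ((card_le_card fun k hk => ?_).trans (card_le_three (a := 0) (b := 1) (c := q - 1)))
        simp only [mem_filter, mem_range, mem_insert, mem_singleton] at hk ⊢
        omega
    _ = 960 * scale N q ε := by norm_num; ring

theorem sum_weight_residue_le (hq : 0 < q) (hqN : q ≤ N) (hcop : IsCoprime a q)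
    (hε : q * N * |ε| ≤ 1) (hγ : |γ| ≤ 1 / (2 * q)) :
    ∑ m ∈ Icc (-(N : ℤ)) N, weight N (residue q a b m / q + γ + m * ε) ≤ 1344 * scale N q ε := by
  classical
  have hfibers : ∑ m ∈ Icc (-(N : ℤ)) N, weight N (residue q a b m / q + γ + m * ε)
      = ∑ k ∈ range q, ∑ m ∈ Icc (-(N : ℤ)) N with residue q a b m = k,
          weight N (k / q + γ + m * ε) := by
    rw [← sum_fiberwise_of_maps_to fun m _ => mem_range.2 (residue_lt hq m)]
    exact sum_congr rfl fun k _ => sum_congr rfl fun m hm => by rw [(mem_filter.1 hm).2]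
  rw [hfibers, ← sum_filter_add_sum_filter_not (range q) fun k => 2 ≤ k ∧ k + 2 ≤ q]
  linarith [sum_far_residues_le (a := a) (b := b) hq hqN hcop hε hγ,
    sum_near_residues_le (a := a) (b := b) (γ := γ) hq hqN hcop hε,
    mul_le_four_mul_scale hq hqN hε]

end Residues

/-- Weyl-type estimate: if `‖θ − a/q‖ < 1/(qN)` with `0 ≤ a < q ≤ N` coprime, then for any
real `β`, `∑_{|m| ≤ N} min(N², ‖mθ + β‖⁻²) ≤ C N³ / (q (1 + N ‖θ − a/q‖^{1/2})²)` for an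
absolute constant `C` (the term being `N²` when `mθ + β ∈ ℤ`). -/
theorem stmt_6 :
    ∃ C : ℝ, 0 < C ∧
      ∀ (θ β : ℝ) (N a q : ℕ), 1 ≤ N → Nat.Coprime a q → a < q → q ≤ N →
        distInt (θ - (a : ℝ) / q) < 1 / ((q : ℝ) * N) →
        ∑ m ∈ Finset.Icc (-(N : ℤ)) (N : ℤ),
            (if distInt ((m : ℝ) * θ + β) = 0 then ((N : ℝ) ^ 2)
              else min ((N : ℝ) ^ 2) ((distInt ((m : ℝ) * θ + β)) ⁻¹ ^ 2))
          ≤ C * (N : ℝ) ^ 3 /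
              ((q : ℝ) * (1 + (N : ℝ) * (distInt (θ - (a : ℝ) / q)) ^ ((1 : ℝ) / 2)) ^ 2) := by
  refine ⟨1344, by norm_num, fun θ β N a q _ hcop haq hqN hdio => ?_⟩
  have hq : 0 < q := by omega
  have hqr : (0 : ℝ) < q := by exact_mod_cast hq
  set s := round (θ - a / q)
  set ε := θ - a / q - s
  set b := round (q * β)
  set γ := β - b / q
  have hD : distInt (θ - a / q) = |ε| := rfl
  have hε : q * N * |ε| ≤ 1 := by
    rw [hD, lt_div_iff₀ (by positivity)] at hdio
    linarith
  have hγ : |γ| ≤ 1 / (2 * q) := by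
    rw [show γ = (q * β - b) / q by rw [sub_div, mul_div_cancel_left₀ _ hqr.ne'], abs_div,
      abs_of_pos hqr, div_le_div_iff₀ hqr (by positivity)]
    nlinarith [abs_sub_round ((q : ℝ) * β)]
  have hterm : ∀ m : ℤ, (if distInt (m * θ + β) = 0 then (N : ℝ) ^ 2
      else min ((N : ℝ) ^ 2) ((distInt (m * θ + β))⁻¹ ^ 2))
        = weight N (residue q a b m / q + γ + m * ε) := by
    intro m
    have hpoint : (m : ℝ) * θ + β
        = m * (((a : ℤ) : ℝ) / q + ε) + (b / q + γ) + ((m * s : ℤ) : ℝ) := by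
      simp only [ε, γ, Int.cast_mul, Int.cast_natCast]
      ring
    rw [ite_eq_weight (by positivity), hpoint, weight, weight, distInt_add_intCast,
      distInt_eq_residue hq]
  rw [sum_congr rfl fun m _ => hterm m, hD, ← Real.sqrt_eq_rpow, mul_div_assoc]
  exact sum_weight_residue_le hq hqN (Nat.isCoprime_iff_coprime.2 hcop) hε hγ
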